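/- Let a<b be reals and f ∈ C¹([a,b],ℝ) be such that |f(x)| + |f'(x)| > 0 for all x ∈ [a,b], and f(a) ≠ 0, f(b) ≠ 0. Set ω(f) := inf_{x∈[a,b]} (|f(x)|+|f'(x)|) and let Z([a,b]) be the number of zeros of f in [a,b]. Then for every δ with 0 < δ < min(ω(f), |f(a)|, |f(b)|), one has the exact Kac-Rice formula Z([a,b]) = (1/(2δ)) ∫_a^b |f'(x)| 1_{{|f(x)| < δ}} dx. -/

import Mathlib

/-!
Since `δ < ω(f)`, the derivative `f'` does not vanish where `|f| ≤ δ`, so by Darboux's theorem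
it has constant sign on the closure `[c, d]` of each maximal interval of `{|f| < δ}`; this
closure lies inside `(a, b)` because `|f a|, |f b| > δ`. Thus `f` is strictly monotone on
`[c, d]` with `|f c| = |f d| = δ`: it runs from `∓δ` to `±δ`, has exactly one zero, and
`∫_c^d |f'| = 2δ`. So zeros and maximal intervals correspond bijectively, and the integral
splits into `2δ` per zero.
-/

open MeasureTheory Set

section DerivNeZero

variable {f f' : ℝ → ℝ}

theorem strictMonoOn_or_strictAntiOn_of_hasDerivWithinAt_ne_zero {s : Set ℝ} (hs : Convex ℝ s)
    (hf : ∀ x ∈ s, HasDerivWithinAt f (f' x) s x) (hf' : ∀ x ∈ s, f' x ≠ 0) :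
    StrictMonoOn f s ∨ StrictAntiOn f s := by
  have hcont : ContinuousOn f s := fun x hx => (hf x hx).continuousWithinAt
  have hint : ∀ x ∈ interior s, HasDerivWithinAt f (f' x) (interior s) x :=
    fun x hx => (hf x (interior_subset hx)).mono interior_subset
  rcases hasDerivWithinAt_forall_lt_or_forall_gt_of_forall_ne hs hf hf' with hneg | hpos
  · exact .inr <| strictAntiOn_of_hasDerivWithinAt_neg hs hcont hint
      fun x hx => hneg x (interior_subset hx)
  · exact .inl <| strictMonoOn_of_hasDerivWithinAt_pos hs hcont hint
      fun x hx => hpos x (interior_subset hx)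

theorem injOn_of_hasDerivWithinAt_ne_zero {s : Set ℝ} (hs : Convex ℝ s)
    (hf : ∀ x ∈ s, HasDerivWithinAt f (f' x) s x) (hf' : ∀ x ∈ s, f' x ≠ 0) : InjOn f s :=
  (strictMonoOn_or_strictAntiOn_of_hasDerivWithinAt_ne_zero hs hf hf').elim
    StrictMonoOn.injOn StrictAntiOn.injOn

theorem integral_eq_sub_of_hasDerivWithinAt_of_nonneg {c d : ℝ} (hcd : c ≤ d)
    (hf : ∀ x ∈ Icc c d, HasDerivWithinAt f (f' x) (Icc c d) x)
    (hf' : ∀ x ∈ Icc c d, 0 ≤ f' x) :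
    ∫ x in c..d, f' x = f d - f c := by
  have hcont : ContinuousOn f (Icc c d) := fun x hx => (hf x hx).continuousWithinAt
  have hderiv : ∀ x ∈ Ioo c d, HasDerivAt f (f' x) x := fun x hx =>
    (hf x (Ioo_subset_Icc_self hx)).hasDerivAt (Icc_mem_nhds hx.1 hx.2)
  refine intervalIntegral.integral_eq_sub_of_hasDerivAt_of_le hcd hcont hderiv ?_
  refine intervalIntegral.intervalIntegrable_deriv_of_nonneg (by rwa [uIcc_of_le hcd]) ?_ ?_
  · simpa [hcd] using hderiv
  · simpa [hcd] using fun x hx => hf' x (Ioo_subset_Icc_self hx)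

theorem integral_abs_eq_abs_sub_of_hasDerivWithinAt_ne_zero {c d : ℝ} (hcd : c ≤ d)
    (hf : ∀ x ∈ Icc c d, HasDerivWithinAt f (f' x) (Icc c d) x)
    (hf' : ∀ x ∈ Icc c d, f' x ≠ 0) :
    ∫ x in c..d, |f' x| = |f d - f c| := by
  have habs : ∀ {g g' : ℝ → ℝ},
      (∀ x ∈ Icc c d, HasDerivWithinAt g (g' x) (Icc c d) x) →
      (∀ x ∈ Icc c d, 0 < g' x) → ∫ x in c..d, |g' x| = |g d - g c| := by
    intro g g' hg hg'
    have hint := integral_eq_sub_of_hasDerivWithinAt_of_nonneg hcd hg fun x hx => (hg' x hx).le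
    have hcongr : ∫ x in c..d, |g' x| = ∫ x in c..d, g' x :=
      intervalIntegral.integral_congr fun x hx =>
        abs_of_pos (hg' x (by rwa [uIcc_of_le hcd] at hx))
    have hnonneg : 0 ≤ ∫ x in c..d, g' x :=
      intervalIntegral.integral_nonneg hcd fun x hx => (hg' x hx).le
    rw [hcongr, hint, abs_of_nonneg (hint ▸ hnonneg)]
  rcases hasDerivWithinAt_forall_lt_or_forall_gt_of_forall_ne (convex_Icc c d) hf hf' with
    hneg | hpos
  · simpa [abs_sub_comm, neg_add_eq_sub] using
      habs (fun x hx => (hf x hx).neg) fun x hx => neg_pos.2 (hneg x hx)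
  · exact habs hf hpos

end DerivNeZero

section Crossing

variable {g : ℝ → ℝ} {a b x δ : ℝ}

theorem exists_last_crossing (hax : a ≤ x) (hg : ContinuousOn g (Icc a x)) (ha : δ ≤ g a)
    (hx : g x < δ) : ∃ c ∈ Ico a x, g c = δ ∧ ∀ y ∈ Ioc c x, g y < δ := by
  have hK : IsCompact (Icc a x ∩ g ⁻¹' Ici δ) :=
    isCompact_Icc.of_isClosed_subset (hg.preimage_isClosed_of_isClosed isClosed_Icc isClosed_Ici)
      inter_subset_left
  obtain ⟨c, ⟨hc, hgc⟩, hmax⟩ := hK.exists_isGreatest ⟨a, ⟨left_mem_Icc.2 hax, ha⟩⟩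
  -- `δ` is attained on `[c, x]`, and only at `c`, the last point of `[a, x]` where `g ≥ δ`
  obtain ⟨t, ht, hgt⟩ := intermediate_value_Icc' hc.2 (hg.mono (Icc_subset_Icc_left hc.1))
    ⟨hx.le, hgc⟩
  have htc : t = c := le_antisymm (hmax ⟨⟨hc.1.trans ht.1, ht.2⟩, hgt.ge⟩) ht.1
  subst htc
  refine ⟨t, ⟨hc.1, hc.2.lt_of_ne ?_⟩, hgt, fun y hy => ?_⟩
  · rintro rfl
    exact hx.ne hgt
  · by_contra! hy'
    exact hy.1.not_ge (hmax ⟨⟨hc.1.trans hy.1.le, hy.2⟩, hy'⟩)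

theorem exists_first_crossing (hxb : x ≤ b) (hg : ContinuousOn g (Icc x b)) (hx : g x < δ)
    (hb : δ ≤ g b) : ∃ d ∈ Ioc x b, g d = δ ∧ ∀ y ∈ Ico x d, g y < δ := by
  have hmaps : MapsTo Neg.neg (Icc (-b) (-x)) (Icc x b) := fun y hy =>
    ⟨le_neg.1 hy.2, neg_le.1 hy.1⟩
  obtain ⟨c, hc, hgc, hlt⟩ := exists_last_crossing (g := fun y => g (-y)) (neg_le_neg hxb)
    (hg.comp continuousOn_neg hmaps) (by simpa using hb) (by simpa using hx)
  refine ⟨-c, ⟨lt_neg.1 hc.2, neg_le.1 hc.1⟩, hgc, fun y hy => ?_⟩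
  simpa using hlt (-y) ⟨lt_neg.1 hy.2, neg_le_neg hy.1⟩

theorem exists_ordConnectedComponent_sublevel_eq_Ioo (hg : ContinuousOn g (Icc a b)) (ha : δ < g a)
    (hb : δ < g b) (hx : x ∈ {y ∈ Icc a b | g y < δ}) :
    ∃ c d, a < c ∧ d < b ∧ g c = δ ∧ g d = δ ∧
      ordConnectedComponent {y ∈ Icc a b | g y < δ} x = Ioo c d := by
  obtain ⟨⟨hax, hxb⟩, hgx⟩ := hx
  obtain ⟨c, ⟨hac, hcx⟩, hgc, hleft⟩ :=
    exists_last_crossing hax (hg.mono (Icc_subset_Icc_right hxb)) ha.le hgx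
  obtain ⟨d, ⟨hxd, hdb⟩, hgd, hright⟩ :=
    exists_first_crossing hxb (hg.mono (Icc_subset_Icc_left hax)) hgx hb.le
  refine ⟨c, d, hac.lt_of_ne (by rintro rfl; exact ha.ne' hgc),
    hdb.lt_of_ne (by rintro rfl; exact hb.ne' hgd), hgc, hgd, ?_⟩
  apply Subset.antisymm
  · intro y hy
    rw [mem_ordConnectedComponent] at hy
    have hcd_not_mem : ∀ e, g e = δ → e ∉ uIcc x y := fun e he hmem => (hy hmem).2.ne he
    constructor
    · by_contra! hyc
      exact hcd_not_mem c hgc ⟨by simp [hyc], by simp [hcx.le]⟩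
    · by_contra! hdy
      exact hcd_not_mem d hgd ⟨by simp [hxd.le], by simp [hdy]⟩
  · refine subset_ordConnectedComponent ⟨hcx, hxd⟩ fun y hy =>
      ⟨⟨hac.trans hy.1.le, hy.2.le.trans hdb⟩, ?_⟩
    rcases le_total y x with hyx | hxy
    · exact hleft y ⟨hy.1, hyx⟩
    · exact hright y ⟨hxy, hy.2⟩

end Crossing

namespace KacRice

structure Admissible (f f' : ℝ → ℝ) (a b δ : ℝ) : Prop where
  hasDerivWithinAt : ∀ x ∈ Icc a b, HasDerivWithinAt f (f' x) (Icc a b) x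
  deriv_ne_zero : ∀ x ∈ Icc a b, |f x| ≤ δ → f' x ≠ 0
  pos : 0 < δ
  lt_abs_left : δ < |f a|
  lt_abs_right : δ < |f b|

namespace Admissible

variable {f f' : ℝ → ℝ} {a b δ x : ℝ}

theorem continuousOn (h : Admissible f f' a b δ) : ContinuousOn f (Icc a b) :=
  fun y hy => (h.hasDerivWithinAt y hy).continuousWithinAt

theorem exists_component_eq_Ioo (h : Admissible f f' a b δ)
    (hx : x ∈ {y ∈ Icc a b | |f y| < δ}) :
    ∃ c d, c < d ∧ Icc c d ⊆ Icc a b ∧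
      ordConnectedComponent {y ∈ Icc a b | |f y| < δ} x = Ioo c d ∧
      InjOn f (Icc c d) ∧ f c = -f d ∧ |f d| = δ ∧ ∫ y in c..d, |f' y| = 2 * δ := by
  obtain ⟨c, d, hac, hdb, hfc, hfd, hcomp⟩ := exists_ordConnectedComponent_sublevel_eq_Ioo
    h.continuousOn.abs h.lt_abs_left h.lt_abs_right hx
  have hxcd : x ∈ Ioo c d := hcomp ▸ self_mem_ordConnectedComponent.2 hx
  have hcd : c < d := hxcd.1.trans hxcd.2
  have hsub : Icc c d ⊆ Icc a b := Icc_subset_Icc hac.le hdb.le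
  have hle : ∀ y ∈ Icc c d, |f y| ≤ δ := by
    intro y hy
    rcases eq_endpoints_or_mem_Ioo_of_mem_Icc hy with rfl | rfl | hy'
    · exact hfc.le
    · exact hfd.le
    · exact (ordConnectedComponent_subset (hcomp ▸ hy')).2.le
  have hderiv : ∀ y ∈ Icc c d, HasDerivWithinAt f (f' y) (Icc c d) y :=
    fun y hy => (h.hasDerivWithinAt y (hsub hy)).mono hsub
  have hne : ∀ y ∈ Icc c d, f' y ≠ 0 := fun y hy => h.deriv_ne_zero y (hsub hy) (hle y hy)
  have hinj := injOn_of_hasDerivWithinAt_ne_zero (convex_Icc c d) hderiv hne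
  have hopp : f c = -f d := by
    refine (abs_eq_abs.1 (hfc.trans hfd.symm)).resolve_left fun heq => hcd.ne ?_
    exact hinj (left_mem_Icc.2 hcd.le) (right_mem_Icc.2 hcd.le) heq
  refine ⟨c, d, hcd, hsub, hcomp, hinj, hopp, hfd, ?_⟩
  rw [integral_abs_eq_abs_sub_of_hasDerivWithinAt_ne_zero hcd.le hderiv hne, hopp, sub_neg_eq_add,
    ← two_mul, abs_mul, hfd, abs_two]

theorem zeros_subset_sublevel (h : Admissible f f' a b δ) :
    {z ∈ Icc a b | f z = 0} ⊆ {y ∈ Icc a b | |f y| < δ} :=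
  fun z ⟨hz, hfz⟩ => ⟨hz, by simpa [hfz] using h.pos⟩

theorem isOpen_component (h : Admissible f f' a b δ) (hx : x ∈ {y ∈ Icc a b | |f y| < δ}) :
    IsOpen (ordConnectedComponent {y ∈ Icc a b | |f y| < δ} x) := by
  obtain ⟨c, d, -, -, hcomp, -⟩ := h.exists_component_eq_Ioo hx
  exact hcomp ▸ isOpen_Ioo

theorem eq_of_mem_component (h : Admissible f f' a b δ) {z w : ℝ} (hz : z ∈ Icc a b)
    (hfz : f z = 0) (hfw : f w = 0)
    (hw : w ∈ ordConnectedComponent {y ∈ Icc a b | |f y| < δ} z) : w = z := by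
  have hzU := h.zeros_subset_sublevel ⟨hz, hfz⟩
  obtain ⟨c, d, -, -, hcomp, hinj, -⟩ := h.exists_component_eq_Ioo hzU
  rw [hcomp] at hw
  have hzcd : z ∈ Ioo c d := hcomp ▸ self_mem_ordConnectedComponent.2 hzU
  exact hinj (Ioo_subset_Icc_self hw) (Ioo_subset_Icc_self hzcd) (hfw.trans hfz.symm)

theorem exists_zero_mem_component (h : Admissible f f' a b δ)
    (hx : x ∈ {y ∈ Icc a b | |f y| < δ}) :
    ∃ z ∈ Icc a b, f z = 0 ∧ x ∈ ordConnectedComponent {y ∈ Icc a b | |f y| < δ} z := by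
  obtain ⟨c, d, hcd, hsub, hcomp, -, hopp, hfd, -⟩ := h.exists_component_eq_Ioo hx
  have h0 : (0 : ℝ) ∈ uIcc (f c) (f d) := by
    rw [hopp, mem_uIcc]
    rcases le_total 0 (f d) with hd | hd
    · exact .inl ⟨neg_nonpos.2 hd, hd⟩
    · exact .inr ⟨hd, neg_nonneg.2 hd⟩
  obtain ⟨z, hz, hfz⟩ := intermediate_value_uIcc
    (uIcc_of_le hcd.le ▸ h.continuousOn.mono hsub) h0
  rw [uIcc_of_le hcd.le] at hz
  have hfd0 : f d ≠ 0 := fun h0 => h.pos.ne' (by simpa [h0] using hfd.symm)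
  have hzcd : z ∈ Ioo c d := by
    refine ⟨hz.1.lt_of_ne ?_, hz.2.lt_of_ne ?_⟩ <;> rintro rfl
    · exact hfd0 (neg_eq_zero.1 (hopp ▸ hfz))
    · exact hfd0 hfz
  refine ⟨z, hsub hz, hfz, mem_ordConnectedComponent_comm.1 ?_⟩
  rwa [hcomp]

theorem integral_component (h : Admissible f f' a b δ) (hx : x ∈ {y ∈ Icc a b | |f y| < δ}) :
    ∫ y in ordConnectedComponent {y ∈ Icc a b | |f y| < δ} x, |f' y| = 2 * δ := by
  obtain ⟨c, d, hcd, -, hcomp, -, -, -, hint⟩ := h.exists_component_eq_Ioo hx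
  rwa [hcomp, ← integral_Ioc_eq_integral_Ioo, ← intervalIntegral.integral_of_le hcd.le]

theorem integrableOn_component (h : Admissible f f' a b δ)
    (hx : x ∈ {y ∈ Icc a b | |f y| < δ}) :
    IntegrableOn (fun y => |f' y|) (ordConnectedComponent {y ∈ Icc a b | |f y| < δ} x) := by
  obtain ⟨c, d, hcd, -, hcomp, -, -, -, hint⟩ := h.exists_component_eq_Ioo hx
  -- an interval integral that is not the junk value `0` comes from an integrable function
  have hii := intervalIntegral.intervalIntegrable_of_integral_ne_zero
    (hint.trans_ne (mul_pos two_pos h.pos).ne')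
  rw [hcomp]
  exact ((intervalIntegrable_iff_integrableOn_Ioc_of_le hcd.le).1 hii).mono_set
    Ioo_subset_Ioc_self

theorem pairwiseDisjoint_component (h : Admissible f f' a b δ) :
    {z ∈ Icc a b | f z = 0}.PairwiseDisjoint
      (ordConnectedComponent {y ∈ Icc a b | |f y| < δ}) := by
  rintro z ⟨hz, hfz⟩ w ⟨-, hfw⟩ hne
  refine disjoint_left.2 fun y hyz hyw => hne (h.eq_of_mem_component hz hfz hfw ?_).symm
  exact mem_ordConnectedComponent_trans hyz (mem_ordConnectedComponent_comm.1 hyw)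

theorem sublevel_eq_biUnion_component (h : Admissible f f' a b δ) :
    {y ∈ Icc a b | |f y| < δ} = ⋃ z ∈ {z ∈ Icc a b | f z = 0},
      ordConnectedComponent {y ∈ Icc a b | |f y| < δ} z := by
  refine Subset.antisymm (fun x hx => ?_)
    (iUnion₂_subset fun z _ => ordConnectedComponent_subset)
  obtain ⟨z, hz, hfz, hxz⟩ := h.exists_zero_mem_component hx
  exact mem_biUnion ⟨hz, hfz⟩ hxz

theorem finite_zeros (h : Admissible f f' a b δ) : {z ∈ Icc a b | f z = 0}.Finite := by
  have hcompact : IsCompact {z ∈ Icc a b | f z = 0} :=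
    isCompact_Icc.of_isClosed_subset
      (h.continuousOn.preimage_isClosed_of_isClosed isClosed_Icc isClosed_singleton)
      fun z hz => hz.1
  have hcover : {z ∈ Icc a b | f z = 0} ⊆ ⋃ z ∈ {z ∈ Icc a b | f z = 0},
      ordConnectedComponent {y ∈ Icc a b | |f y| < δ} z :=
    fun z hz => mem_biUnion hz (self_mem_ordConnectedComponent.2 (h.zeros_subset_sublevel hz))
  -- each component contains exactly one zero, so a finite subcover is the zero set itself
  obtain ⟨T, hTsub, hTfin, hTcover⟩ := hcompact.elim_finite_subcover_image
    (fun z hz => h.isOpen_component (h.zeros_subset_sublevel hz)) hcover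
  refine hTfin.subset fun w hw => ?_
  obtain ⟨z, hzT, hwz⟩ := mem_iUnion₂.1 (hTcover hw)
  obtain ⟨hz, hfz⟩ := hTsub hzT
  exact h.eq_of_mem_component hz hfz hw.2 hwz ▸ hzT

theorem integral_eq_ncard_zeros_mul (h : Admissible f f' a b δ) (hab : a ≤ b) :
    ∫ x in a..b, (if |f x| < δ then |f' x| else 0) =
      {z ∈ Icc a b | f z = 0}.ncard * (2 * δ) := by
  set Z := {z ∈ Icc a b | f z = 0}
  set U := {y ∈ Icc a b | |f y| < δ}
  have hZ := h.finite_zeros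
  have hU : U = ⋃ z ∈ hZ.toFinset, ordConnectedComponent U z := by
    simpa only [Finite.mem_toFinset] using h.sublevel_eq_biUnion_component
  have hZU : ∀ z ∈ hZ.toFinset, z ∈ U :=
    fun z hz => h.zeros_subset_sublevel (hZ.mem_toFinset.1 hz)
  have hUmeas : MeasurableSet U := by
    rw [hU]
    exact Finset.measurableSet_biUnion _ fun z hz => (h.isOpen_component (hZU z hz)).measurableSet
  have hUsub : U ⊆ Ioc a b := fun x hx =>
    ⟨hx.1.1.lt_of_ne (by rintro rfl; exact h.lt_abs_left.not_gt hx.2), hx.1.2⟩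
  calc ∫ x in a..b, (if |f x| < δ then |f' x| else 0)
      = ∫ x in Ioc a b, U.indicator (fun y => |f' y|) x := by
        rw [intervalIntegral.integral_of_le hab]
        refine setIntegral_congr_fun measurableSet_Ioc fun x hx => ?_
        simp [U, indicator, hx.1.le, hx.2]
    _ = ∫ x in U, |f' x| := by rw [setIntegral_indicator hUmeas, inter_eq_right.2 hUsub]
    _ = ∫ x in ⋃ z ∈ hZ.toFinset, ordConnectedComponent U z, |f' x| := by rw [← hU]
    _ = ∑ z ∈ hZ.toFinset, ∫ x in ordConnectedComponent U z, |f' x| := by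
        refine integral_biUnion_finset _ (fun z hz => ?_) ?_ fun z hz => ?_
        · exact (h.isOpen_component (hZU z hz)).measurableSet
        · rw [Finite.coe_toFinset]
          exact h.pairwiseDisjoint_component
        · exact h.integrableOn_component (hZU z hz)
    _ = Z.ncard * (2 * δ) := by
        rw [Finset.sum_congr rfl fun z hz => h.integral_component (hZU z hz), Finset.sum_const,
          nsmul_eq_mul, ncard_eq_toFinset_card _ hZ]

end Admissible

end KacRice

theorem statement11
    (a b : ℝ) (hab : a < b) (f f' : ℝ → ℝ)
    (hderiv : ∀ x ∈ Set.Icc a b, HasDerivWithinAt f (f' x) (Set.Icc a b) x) :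
    ∀ δ : ℝ, 0 < δ →
      δ < min (sInf ((fun x => |f x| + |f' x|) '' Set.Icc a b)) (min |f a| |f b|) →
      ({x ∈ Set.Icc a b | f x = 0}.ncard : ℝ) =
        (∫ x in a..b, if |f x| < δ then |f' x| else 0) / (2 * δ) := by
  intro δ hδ hδlt
  obtain ⟨hω, hfa, hfb⟩ := by simpa only [lt_min_iff] using hδlt
  have hne : ∀ x ∈ Icc a b, |f x| ≤ δ → f' x ≠ 0 := by
    intro x hx hfx hf'x
    have hinf : sInf ((fun x => |f x| + |f' x|) '' Icc a b) ≤ |f x| + |f' x| :=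
      csInf_le ⟨0, by rintro _ ⟨y, -, rfl⟩; positivity⟩ (mem_image_of_mem _ hx)
    rw [hf'x, abs_zero, add_zero] at hinf
    exact (hω.trans_le hinf).not_ge hfx
  have h : KacRice.Admissible f f' a b δ := ⟨hderiv, hne, hδ, hfa, hfb⟩
  rw [h.integral_eq_ncard_zeros_mul hab.le, mul_div_cancel_right₀ _ (by positivity)]
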